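/- arXiv:1903.05175 — 8 statements merged into one kernel-verified Lean document; each statement's English description precedes it below -/
import Mathlib

section
/- In the Euclidean plane E := EuclideanSpace ℝ (Fin 2), let x be a line and A, B, C points. If A and B lie on the same side of x, and B and C lie on the same side of x, then A and C lie on the same side of x. -/
/-- `A` and `B` lie on the same side of the line `x`: neither lies on `x` and no
point of `x` is strictly between them. -/
def SameSideOfLine (x : AffineSubspace ℝ (EuclideanSpace ℝ (Fin 2)))
    (A B : EuclideanSpace ℝ (Fin 2)) : Prop :=
  A ∉ x ∧ B ∉ x ∧ ¬ ∃ P ∈ x, Sbtw ℝ A P B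

/-! A line in the plane is a hyperplane, so relative to a point `p` on it every point `y`
decomposes as `y = (t • (x -ᵥ p) + v) +ᵥ p` with `v` along the line; for `x, y` off the line
the sign of `t` puts them on the same or on opposite sides. Hence "no point of the line
strictly between" agrees with Mathlib's `AffineSubspace.SSameSide`, which is transitive. -/

theorem Submodule.isCoatom_of_finrank_add_one_eq {K V : Type*} [DivisionRing K]
    [AddCommGroup V] [Module K V] [FiniteDimensional K V] {W : Submodule K V}
    (h : Module.finrank K W + 1 = Module.finrank K V) : IsCoatom W := by
  refine ⟨fun hW => ?_, fun U hWU => ?_⟩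
  · rw [hW, finrank_top] at h
    omega
  · have hlt := Submodule.finrank_lt_finrank_of_lt hWU
    have hle := U.finrank_le
    exact Submodule.eq_top_of_finrank_eq (by omega)

namespace AffineSubspace

variable {R V P : Type*} [Field R] [LinearOrder R] [IsStrictOrderedRing R]
  [AddCommGroup V] [Module R V] [AddTorsor V P] {s : AffineSubspace R P} {x y : P}

theorem sOppSide_iff_exists_sbtw (hx : x ∉ s) :
    s.SOppSide x y ↔ ∃ p ∈ s, Sbtw R x p y :=
  ⟨SOppSide.exists_sbtw, fun ⟨_, hp, hxpy⟩ => hxpy.sOppSide_of_notMem_of_mem hx hp⟩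

theorem sSameSide_or_sOppSide_of_isCoatom (hs : IsCoatom s.direction)
    (hne : (s : Set P).Nonempty) (hx : x ∉ s) (hy : y ∉ s) :
    s.SSameSide x y ∨ s.SOppSide x y := by
  obtain ⟨p, hp⟩ := hne
  have hxp : x -ᵥ p ∉ s.direction := fun h => hx ((vsub_right_mem_direction_iff_mem hp x).mp h)
  have hsup := (Submodule.isCompl_span_singleton_of_isCoatom_of_notMem hs hxp).sup_eq_top
  obtain ⟨v, hv, w, hw, hvw⟩ := Submodule.mem_sup.mp (hsup ▸ Submodule.mem_top : y -ᵥ p ∈ _)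
  obtain ⟨t, rfl⟩ := Submodule.mem_span_singleton.mp hw
  have hq : v +ᵥ p ∈ s := vadd_mem_of_mem_direction hv hp
  have hy_eq : y = t • (x -ᵥ p) +ᵥ (v +ᵥ p) := by
    rw [vadd_vadd, add_comm, hvw, vsub_vadd]
  rcases lt_trichotomy t 0 with ht | rfl | ht
  · exact .inr (hy_eq ▸ sOppSide_smul_vsub_vadd_right hx hp hq ht)
  · exact absurd (by rwa [hy_eq, zero_smul, zero_vadd]) hy
  · exact .inl (hy_eq ▸ sSameSide_smul_vsub_vadd_right hx hp hq ht)

theorem sSameSide_iff_not_sOppSide_of_isCoatom (hs : IsCoatom s.direction)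
    (hne : (s : Set P).Nonempty) :
    s.SSameSide x y ↔ x ∉ s ∧ y ∉ s ∧ ¬ s.SOppSide x y := by
  refine ⟨fun h => ⟨h.left_notMem, h.right_notMem, h.not_sOppSide⟩, ?_⟩
  rintro ⟨hx, hy, hopp⟩
  exact (sSameSide_or_sOppSide_of_isCoatom hs hne hx hy).resolve_right hopp

end AffineSubspace

theorem sameSideOfLine_iff_sSameSide {x : AffineSubspace ℝ (EuclideanSpace ℝ (Fin 2))}
    (hx : Module.finrank ℝ x.direction = 1) {A B : EuclideanSpace ℝ (Fin 2)} :
    SameSideOfLine x A B ↔ x.SSameSide A B := by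
  have hline : IsCoatom x.direction :=
    Submodule.isCoatom_of_finrank_add_one_eq (by simp [hx])
  have hne : (x : Set (EuclideanSpace ℝ (Fin 2))).Nonempty := by
    rw [AffineSubspace.nonempty_iff_ne_bot]
    rintro rfl
    rw [AffineSubspace.direction_bot, finrank_bot] at hx
    exact zero_ne_one hx
  rw [AffineSubspace.sSameSide_iff_not_sOppSide_of_isCoatom hline hne, SameSideOfLine]
  refine and_congr_right fun hA => and_congr_right fun _ => ?_
  rw [AffineSubspace.sOppSide_iff_exists_sbtw hA]

theorem sameSide_trans
    (x : AffineSubspace ℝ (EuclideanSpace ℝ (Fin 2)))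
    (hx : Module.finrank ℝ x.direction = 1)
    (A B C : EuclideanSpace ℝ (Fin 2))
    (hAB : SameSideOfLine x A B) (hBC : SameSideOfLine x B C) :
    SameSideOfLine x A C := by
  rw [sameSideOfLine_iff_sSameSide hx] at *
  exact hAB.trans hBC
end

section
/- In the Euclidean plane E := EuclideanSpace ℝ (Fin 2), let x be a line and A, B, C points. If A and B lie on opposite sides of x, and B and C lie on opposite sides of x, then A and C lie on the same side of x. -/
/-- `A` and `B` lie on opposite sides of the line `x`: neither lies on `x` and some
point of `x` is strictly between them. -/
def OppSideOfLine (x : AffineSubspace ℝ (EuclideanSpace ℝ (Fin 2)))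
    (A B : EuclideanSpace ℝ (Fin 2)) : Prop :=
  A ∉ x ∧ B ∉ x ∧ ∃ P ∈ x, Sbtw ℝ A P B

/-! Both notions are compared with Mathlib's `AffineSubspace.SOppSide` / `SSameSide`, for which
transitivity (`SOppSide.trans`) is already available. -/

section

variable {x : AffineSubspace ℝ (EuclideanSpace ℝ (Fin 2))} {A B : EuclideanSpace ℝ (Fin 2)}

theorem OppSideOfLine.sOppSide (h : OppSideOfLine x A B) : x.SOppSide A B := by
  obtain ⟨hA, -, P, hP, hAPB⟩ := h
  exact hAPB.sOppSide_of_notMem_of_mem hA hP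

theorem SameSideOfLine.of_sSameSide (h : x.SSameSide A B) : SameSideOfLine x A B := by
  refine ⟨h.left_notMem, h.right_notMem, ?_⟩
  rintro ⟨P, hP, hAPB⟩
  exact h.not_sOppSide (hAPB.sOppSide_of_notMem_of_mem h.left_notMem hP)

end

theorem oppSide_oppSide_sameSide_general
    (x : AffineSubspace ℝ (EuclideanSpace ℝ (Fin 2)))
    (A B C : EuclideanSpace ℝ (Fin 2))
    (hAB : OppSideOfLine x A B) (hBC : OppSideOfLine x B C) :
    SameSideOfLine x A C :=
  .of_sSameSide (hAB.sOppSide.trans hBC.sOppSide)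

theorem oppSide_oppSide_sameSide
    (x : AffineSubspace ℝ (EuclideanSpace ℝ (Fin 2)))
    (hx : Module.finrank ℝ x.direction = 1)
    (A B C : EuclideanSpace ℝ (Fin 2))
    (hAB : OppSideOfLine x A B) (hBC : OppSideOfLine x B C) :
    SameSideOfLine x A C :=
  oppSide_oppSide_sameSide_general x A B C hAB hBC
end

section
/- (ASA congruence) Let A, B, C, D, E, F be points in the Euclidean plane E := EuclideanSpace ℝ (Fin 2) with ¬ Collinear ℝ {A, B, C} and ¬ Collinear ℝ {D, E, F}. If dist A C = dist D F, ∠ B C A = ∠ E F D, and ∠ C A B = ∠ F D E, then dist A B = dist D E, dist B C = dist E F, and ∠ A B C = ∠ D E F. -/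
open EuclideanGeometry

theorem asa_congruence_general
    (A B C D E F : EuclideanSpace ℝ (Fin 2))
    (h₁ : ¬ Collinear ℝ ({A, B, C} : Set (EuclideanSpace ℝ (Fin 2))))
    (hAC : dist A C = dist D F)
    (hang₁ : ∠ B C A = ∠ E F D) (hang₂ : ∠ C A B = ∠ F D E) :
    dist A B = dist D E ∧ dist B C = dist E F ∧ ∠ A B C = ∠ D E F := by
  have hBCA : ¬ Collinear ℝ ({B, C, A} : Set (EuclideanSpace ℝ (Fin 2))) := by
    rwa [Set.insert_comm, Set.pair_comm] at h₁
  have hCA : dist C A = dist F D := by rw [dist_comm, hAC, dist_comm]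
  have hcong : Congruent ![B, C, A] ![E, F, D] := angle_side_angle hBCA hang₁ hCA hang₂
  refine ⟨?_, ?_, ?_⟩
  · simpa using hcong.dist_eq 2 0
  · simpa using hcong.dist_eq 0 1
  · simpa using angle_eq_of_congruent hcong 2 0 1

theorem asa_congruence
    (A B C D E F : EuclideanSpace ℝ (Fin 2))
    (h₁ : ¬ Collinear ℝ ({A, B, C} : Set (EuclideanSpace ℝ (Fin 2))))
    (h₂ : ¬ Collinear ℝ ({D, E, F} : Set (EuclideanSpace ℝ (Fin 2))))
    (hAC : dist A C = dist D F)
    (hang₁ : ∠ B C A = ∠ E F D) (hang₂ : ∠ C A B = ∠ F D E) :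
    dist A B = dist D E ∧ dist B C = dist E F ∧ ∠ A B C = ∠ D E F :=
  asa_congruence_general A B C D E F h₁ hAC hang₁ hang₂
end

section
/- (Triangle superposition) Let A, B, C, D, E, F be points in the Euclidean plane E := EuclideanSpace ℝ (Fin 2) with ¬ Collinear ℝ {A, B, C}, ¬ Collinear ℝ {D, E, F}, and dist A B = dist D E. Then there exists a point F' such that F' and F lie strictly on the same side of the line through D and E (i.e., (affineSpan ℝ {D, E}).SSameSide F F'), dist D F' = dist A C, and dist E F' = dist B C. -/
/-!
Since `dist A B = dist D E`, some isometry of the plane (a translation composed with a linear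
reflection) sends `A ↦ D` and `B ↦ E`; the image `C'` of `C` has the required distances to
`D` and `E` and, like `C`, lies off the line `DE`. A line in the plane has a one-dimensional
normal space, so `C'` lies either on the same side of `DE` as `F` or on the opposite side, and
in the latter case its mirror image in `DE` does the job.
-/

open Module EuclideanGeometry AffineSubspace

theorem notMem_affineSpan_pair_of_not_collinear {k V P : Type*} [Field k] [AddCommGroup V]
    [Module k V] [AddTorsor V P] {p₁ p₂ p₃ : P} (h : ¬Collinear k {p₁, p₂, p₃}) :
    p₃ ∉ line[k, p₁, p₂] := by
  intro hp
  have hcol := collinear_insert_of_mem_affineSpan_pair hp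
  rw [Set.insert_comm, Set.pair_comm] at hcol
  exact h hcol

theorem AffineEquiv.collinear_triple_iff {k V P V₂ P₂ : Type*} [Field k] [AddCommGroup V]
    [Module k V] [AddTorsor V P] [AddCommGroup V₂] [Module k V₂] [AddTorsor V₂ P₂]
    (e : P ≃ᵃ[k] P₂) {p₁ p₂ p₃ : P} :
    Collinear k {e p₁, e p₂, e p₃} ↔ Collinear k {p₁, p₂, p₃} := by
  rw [← not_iff_not, ← affineIndependent_iff_not_collinear_set,
    ← affineIndependent_iff_not_collinear_set, ← e.affineIndependent_iff]
  convert Iff.rfl using 2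
  ext i
  fin_cases i <;> rfl

namespace EuclideanGeometry

variable {V P : Type*} [NormedAddCommGroup V] [InnerProductSpace ℝ V] [MetricSpace P]
  [NormedAddTorsor V P]

theorem exists_affineIsometryEquiv_apply_eq_of_dist_eq {p₁ p₂ q₁ q₂ : P}
    (h : dist p₁ p₂ = dist q₁ q₂) : ∃ T : P ≃ᵃⁱ[ℝ] P, T p₁ = q₁ ∧ T p₂ = q₂ := by
  have hnorm : ‖p₂ -ᵥ p₁‖ = ‖q₂ -ᵥ q₁‖ := by
    rw [← dist_eq_norm_vsub, ← dist_eq_norm_vsub, dist_comm, h, dist_comm]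
  refine ⟨(AffineIsometryEquiv.vaddConst ℝ p₁).symm.trans
    ((ℝ ∙ ((p₂ -ᵥ p₁) - (q₂ -ᵥ q₁)))ᗮ.reflection.toAffineIsometryEquiv.trans
      (AffineIsometryEquiv.vaddConst ℝ q₁)), by simp, ?_⟩
  simp [Submodule.reflection_sub hnorm]

theorem finrank_direction_orthogonal_affineSpan_pair (hV : finrank ℝ V = 2) {p₁ p₂ : P}
    (h : p₁ ≠ p₂) : finrank ℝ (line[ℝ, p₁, p₂]).directionᗮ = 1 := by
  have : Fact (finrank ℝ V = 1 + 1) := ⟨hV⟩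
  rw [direction_affineSpan, vectorSpan_pair]
  exact Submodule.finrank_orthogonal_span_singleton (vsub_ne_zero.2 h)

variable {s : AffineSubspace ℝ P} [Nonempty s] [s.direction.HasOrthogonalProjection]

theorem reflection_notMem {y : P} (hy : y ∉ s) : reflection s y ∉ s := by
  intro h
  rw [← reflection_eq_self_iff, reflection_reflection] at h
  exact hy ((reflection_eq_self_iff y).1 h.symm)

theorem sSameSide_or_sSameSide_reflection (hs : finrank ℝ s.directionᗮ = 1) {x y : P}
    (hx : x ∉ s) (hy : y ∉ s) : s.SSameSide x y ∨ s.SSameSide x (reflection s y) := by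
  set m := x -ᵥ orthogonalProjection s x
  have hm : m ≠ 0 := by
    rwa [Ne, vsub_eq_zero_iff_eq, eq_comm, orthogonalProjection_eq_self_iff]
  obtain ⟨c, hc⟩ := (finrank_eq_one_iff_of_nonzero'
    (⟨m, vsub_orthogonalProjection_mem_direction_orthogonal s x⟩ : s.directionᗮ)
    (by simpa using hm)).1 hs
    ⟨y -ᵥ orthogonalProjection s y, vsub_orthogonalProjection_mem_direction_orthogonal s y⟩
  have hx' : x -ᵥ orthogonalProjection s x = (1 : ℝ) • m := (one_smul ℝ m).symm
  have hy' : y -ᵥ orthogonalProjection s y = c • m := congrArg Subtype.val hc.symm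
  rcases le_or_gt 0 c with hc0 | hc0
  · exact .inl <| sSameSide_of_vsub_eq_smul (orthogonalProjection_mem x)
      (orthogonalProjection_mem y) hx' hy' (by simpa) hx hy
  · have hy'' : reflection s y -ᵥ orthogonalProjection s y = (-c) • m := by
      rw [reflection_apply', vadd_vsub, ← neg_vsub_eq_vsub_rev, hy', neg_smul]
    exact .inr <| sSameSide_of_vsub_eq_smul (orthogonalProjection_mem x)
      (orthogonalProjection_mem y) hx' hy'' (by linarith) hx (reflection_notMem hy)

end EuclideanGeometry

theorem triangle_superposition
    (A B C D E F : EuclideanSpace ℝ (Fin 2))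
    (h₁ : ¬ Collinear ℝ ({A, B, C} : Set (EuclideanSpace ℝ (Fin 2))))
    (h₂ : ¬ Collinear ℝ ({D, E, F} : Set (EuclideanSpace ℝ (Fin 2))))
    (hbase : dist A B = dist D E) :
    ∃ F' : EuclideanSpace ℝ (Fin 2),
      (affineSpan ℝ ({D, E} : Set (EuclideanSpace ℝ (Fin 2)))).SSameSide F F' ∧
      dist D F' = dist A C ∧ dist E F' = dist B C := by
  have hDE : D ≠ E := dist_pos.1 (hbase ▸ dist_pos.2 (ne₁₂_of_not_collinear h₁))
  obtain ⟨T, rfl, rfl⟩ := exists_affineIsometryEquiv_apply_eq_of_dist_eq hbase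
  have hC : T C ∉ line[ℝ, T A, T B] :=
    notMem_affineSpan_pair_of_not_collinear (T.toAffineEquiv.collinear_triple_iff.not.2 h₁)
  have hF : F ∉ line[ℝ, T A, T B] := notMem_affineSpan_pair_of_not_collinear h₂
  rcases sSameSide_or_sSameSide_reflection
    (finrank_direction_orthogonal_affineSpan_pair finrank_euclideanSpace_fin hDE) hF hC with h | h
  · exact ⟨T C, h, T.dist_map A C, T.dist_map B C⟩
  · refine ⟨_, h, ?_, ?_⟩
    · rw [dist_reflection_eq_of_mem _ (left_mem_affineSpan_pair ℝ _ _), T.dist_map]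
    · rw [dist_reflection_eq_of_mem _ (right_mem_affineSpan_pair ℝ _ _), T.dist_map]
end

section
/- Let O, A, B, A', B', P be points in the Euclidean plane E := EuclideanSpace ℝ (Fin 2) and O' a further point, with ¬ Collinear ℝ {O, O', P}. Suppose: Sbtw ℝ A O B with dist O A = dist O B (A, B are diametrically opposite on the circle centred at O), Sbtw ℝ A' O' B' with dist O' A' = dist O' B', dist O A = dist O P and dist O' A' = dist O' P (P lies on both circles), and the four points A, O, O', B' are in strict order (Sbtw ℝ A O O', Sbtw ℝ A O B', Sbtw ℝ A O' B', Sbtw ℝ O O' B'). Then the four points A, A', B, B' are in strict order: Sbtw ℝ A A' B, Sbtw ℝ A A' B', Sbtw ℝ A B B', and Sbtw ℝ A' B B'. -/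
open AffineMap

/-!
Since `P` lies off the line `OO'`, the distances `d = OO'`, `r = OA = OP` and `r' = O'A' = O'P`
satisfy the three strict triangle inequalities. In the affine coordinate on the line `OO'` with
`O = 0` and `O' = 1`, the points `A, A', B, B'` sit at `-r/d, 1 - r'/d, r/d, 1 + r'/d`, and these
are increasing precisely because of the three triangle inequalities.
-/

theorem sbtw_iff_lt_and_lt_or_lt_and_lt {R : Type*} [Field R] [LinearOrder R]
    [IsStrictOrderedRing R] {x y z : R} :
    Sbtw R x y z ↔ x < y ∧ y < z ∨ z < y ∧ y < x := by
  refine ⟨fun h => ?_, ?_⟩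
  · rcases le_total x z with hxz | hzx
    · obtain ⟨hxy, hyz⟩ := (wbtw_iff_of_le hxz).1 h.wbtw
      exact .inl ⟨hxy.lt_of_ne h.left_ne, hyz.lt_of_ne h.ne_right⟩
    · obtain ⟨hzy, hyx⟩ := (wbtw_iff_of_le hzx).1 h.symm.wbtw
      exact .inr ⟨hzy.lt_of_ne h.symm.left_ne, hyx.lt_of_ne h.ne_left⟩
  · rintro (⟨hxy, hyz⟩ | ⟨hzy, hyx⟩)
    · exact .of_lt_of_lt hxy hyz
    · exact (Sbtw.of_lt_of_lt hzy hyx).symm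

theorem Real.diameters_interlock {a b a' b' : ℝ} (h0 : Sbtw ℝ a 0 b) (hab : dist 0 a = dist 0 b)
    (h1 : Sbtw ℝ a' 1 b') (ha'b' : dist 1 a' = dist 1 b') (ha : Sbtw ℝ a 0 1) (hb' : Sbtw ℝ 0 1 b')
    (hd : dist (0 : ℝ) 1 < dist 0 a + dist 1 a') (hr : dist 0 a < dist (0 : ℝ) 1 + dist 1 a')
    (hr' : dist 1 a' < dist (0 : ℝ) 1 + dist 0 a) :
    a < a' ∧ a' < b ∧ b < b' := by
  rw [sbtw_iff_lt_and_lt_or_lt_and_lt] at h0 h1 ha hb'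
  have ha0 : a < 0 := by rcases ha with h | h <;> linarith [h.1, h.2]
  have hb0 : 0 < b := by rcases h0 with h | h <;> linarith [h.1, h.2]
  have hb'1 : 1 < b' := by rcases hb' with h | h <;> linarith [h.1, h.2]
  have ha'1 : a' < 1 := by rcases h1 with h | h <;> linarith [h.1, h.2]
  norm_num [Real.dist_eq, abs_of_neg, abs_of_pos, ha0, hb0, hb'1, ha'1] at hab ha'b' hd hr hr'
  exact ⟨by linarith, by linarith, by linarith⟩

section Line

variable {V P : Type*} [NormedAddCommGroup V] [NormedSpace ℝ V] [MetricSpace P]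
  [NormedAddTorsor V P]

theorem dist_lt_dist_add_dist_of_not_collinear [StrictConvexSpace ℝ V] {x y z : P}
    (h : ¬Collinear ℝ {x, y, z}) : dist x z < dist x y + dist y z :=
  (dist_triangle x y z).lt_of_ne fun heq => h (dist_add_dist_eq_iff.1 heq.symm).collinear

theorem diameters_interlock {O A B O' A' B' : P} (hAOB : Sbtw ℝ A O B)
    (hOA : dist O A = dist O B) (hA'O'B' : Sbtw ℝ A' O' B') (hO'A' : dist O' A' = dist O' B')
    (h₁ : Sbtw ℝ A O O') (h₄ : Sbtw ℝ O O' B')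
    (hd : dist O O' < dist O A + dist O' A') (hr : dist O A < dist O O' + dist O' A')
    (hr' : dist O' A' < dist O O' + dist O A) :
    Sbtw ℝ A A' B ∧ Sbtw ℝ A A' B' ∧ Sbtw ℝ A B B' ∧ Sbtw ℝ A' B B' := by
  have hOO' : O ≠ O' := h₁.ne_right
  have hA : A ∈ line[ℝ, O, O'] := by
    simpa only [Set.pair_comm] using h₁.wbtw.left_mem_affineSpan_of_right_ne hOO'.symm
  have hB' : B' ∈ line[ℝ, O, O'] := h₄.wbtw.right_mem_affineSpan_of_left_ne hOO'
  have hB : B ∈ line[ℝ, O, O'] := affineSpan_pair_le_of_mem_of_mem hA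
    (left_mem_affineSpan_pair ℝ O O') (hAOB.wbtw.right_mem_affineSpan_of_left_ne hAOB.left_ne)
  have hA' : A' ∈ line[ℝ, O, O'] := affineSpan_pair_le_of_mem_of_mem hB'
    (right_mem_affineSpan_pair ℝ O O')
    (hA'O'B'.wbtw.left_mem_affineSpan_of_right_ne hA'O'B'.ne_right.symm)
  obtain ⟨a, rfl⟩ := mem_affineSpan_pair_iff_exists_lineMap_eq.1 hA
  obtain ⟨b, rfl⟩ := mem_affineSpan_pair_iff_exists_lineMap_eq.1 hB
  obtain ⟨a', rfl⟩ := mem_affineSpan_pair_iff_exists_lineMap_eq.1 hA'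
  obtain ⟨b', rfl⟩ := mem_affineSpan_pair_iff_exists_lineMap_eq.1 hB'
  have hf := lineMap_injective ℝ hOO'
  have hc : 0 < dist O O' := dist_pos.2 hOO'
  have hdist (s t : ℝ) : dist s t = dist (lineMap O O' s) (lineMap O O' t) / dist O O' := by
    rw [dist_lineMap_lineMap, mul_div_cancel_right₀ _ hc.ne']
  obtain ⟨haa', ha'b, hbb'⟩ : a < a' ∧ a' < b ∧ b < b' := by
    apply Real.diameters_interlock <;>
    simp only [← hf.sbtw_map_iff, hdist, ← add_div, div_left_inj' hc.ne',
      div_lt_div_iff_of_pos_right hc, lineMap_apply_zero, lineMap_apply_one] <;>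
    assumption
  refine ⟨?_, ?_, ?_, ?_⟩ <;> refine hf.sbtw_map_iff.2 (.of_lt_of_lt ?_ ?_) <;> linarith

end Line

theorem intersecting_circles_interlocked_order_general
    (O A B A' B' P O' : EuclideanSpace ℝ (Fin 2))
    (hncol : ¬ Collinear ℝ ({O, O', P} : Set (EuclideanSpace ℝ (Fin 2))))
    (hAOB : Sbtw ℝ A O B) (hOA : dist O A = dist O B)
    (hA'O'B' : Sbtw ℝ A' O' B') (hO'A' : dist O' A' = dist O' B')
    (hP : dist O A = dist O P) (hP' : dist O' A' = dist O' P)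
    (h₁ : Sbtw ℝ A O O') (h₄ : Sbtw ℝ O O' B') :
    Sbtw ℝ A A' B ∧ Sbtw ℝ A A' B' ∧ Sbtw ℝ A B B' ∧ Sbtw ℝ A' B B' := by
  refine diameters_interlock hAOB hOA hA'O'B' hO'A' h₁ h₄ ?_ ?_ ?_ <;> rw [hP, hP']
  · rw [dist_comm O' P]
    exact dist_lt_dist_add_dist_of_not_collinear (by rwa [Set.pair_comm])
  · exact dist_lt_dist_add_dist_of_not_collinear hncol
  · rw [dist_comm O O']
    exact dist_lt_dist_add_dist_of_not_collinear (by rwa [Set.insert_comm])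

theorem intersecting_circles_interlocked_order
    (O A B A' B' P O' : EuclideanSpace ℝ (Fin 2))
    (hncol : ¬ Collinear ℝ ({O, O', P} : Set (EuclideanSpace ℝ (Fin 2))))
    (hAOB : Sbtw ℝ A O B) (hOA : dist O A = dist O B)
    (hA'O'B' : Sbtw ℝ A' O' B') (hO'A' : dist O' A' = dist O' B')
    (hP : dist O A = dist O P) (hP' : dist O' A' = dist O' P)
    (h₁ : Sbtw ℝ A O O') (h₂ : Sbtw ℝ A O B')
    (h₃ : Sbtw ℝ A O' B') (h₄ : Sbtw ℝ O O' B') :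
    Sbtw ℝ A A' B ∧ Sbtw ℝ A A' B' ∧ Sbtw ℝ A B B' ∧ Sbtw ℝ A' B B' :=
  intersecting_circles_interlocked_order_general O A B A' B' P O' hncol hAOB hOA hA'O'B' hO'A' hP
    hP' h₁ h₄
end

section
/- In the Euclidean plane E := EuclideanSpace ℝ (Fin 2), let x, y, z be lines (affine subspaces whose direction has finrank 1). Define x ∥ y to mean: x = y, or x and y have no common point. If x ∥ y and y ∥ z, then x ∥ z. -/
/-! Two distinct hyperplane directions span the whole space, so nonempty hyperplanes with different
directions meet; hence parallel lines in the plane share their direction. Lines with a common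
direction and a common point coincide. -/

/-- Two lines are parallel: they coincide or have no common point. -/
def ParallelLines (x y : AffineSubspace ℝ (EuclideanSpace ℝ (Fin 2))) : Prop :=
  x = y ∨ ¬ ∃ A : EuclideanSpace ℝ (Fin 2), A ∈ x ∧ A ∈ y

open Module

section Hyperplane

variable {k V P : Type*} [DivisionRing k] [AddCommGroup V] [Module k V] [AddTorsor V P]
  [FiniteDimensional k V]

theorem Submodule.sup_eq_top_of_ne_of_finrank_add_one_eq {p q : Submodule k V}
    (hp : finrank k p + 1 = finrank k V) (hq : finrank k q = finrank k p) (hne : p ≠ q) :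
    p ⊔ q = ⊤ := by
  have hlt : p < p ⊔ q := by
    refine lt_of_le_of_ne le_sup_left fun heq => hne ?_
    exact (Submodule.eq_of_le_of_finrank_eq (heq ▸ le_sup_right) hq).symm
  have := Submodule.finrank_lt_finrank_of_lt hlt
  have := Submodule.finrank_le (p ⊔ q)
  exact Submodule.eq_top_of_finrank_eq (by omega)

theorem AffineSubspace.inter_nonempty_of_direction_ne_of_finrank_add_one_eq
    {s t : AffineSubspace k P} (hs : (s : Set P).Nonempty) (ht : (t : Set P).Nonempty)
    (hsV : finrank k s.direction + 1 = finrank k V)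
    (hts : finrank k t.direction = finrank k s.direction) (hne : s.direction ≠ t.direction) :
    ((s : Set P) ∩ t).Nonempty :=
  inter_nonempty_of_nonempty_of_sup_direction_eq_top hs ht
    (Submodule.sup_eq_top_of_ne_of_finrank_add_one_eq hsV hts hne)

end Hyperplane

theorem AffineSubspace.nonempty_of_finrank_direction_eq_one {k V P : Type*} [DivisionRing k]
    [AddCommGroup V] [Module k V] [AddTorsor V P] {s : AffineSubspace k P}
    (hs : finrank k s.direction = 1) : (s : Set P).Nonempty :=
  (nonempty_iff_ne_bot s).2 <| by
    rintro rfl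
    rw [direction_bot, finrank_bot] at hs
    exact zero_ne_one hs

theorem ParallelLines.direction_eq {x y : AffineSubspace ℝ (EuclideanSpace ℝ (Fin 2))}
    (hx : finrank ℝ x.direction = 1) (hy : finrank ℝ y.direction = 1) (hxy : ParallelLines x y) :
    x.direction = y.direction := by
  rcases hxy with rfl | hdisj
  · rfl
  by_contra hne
  exact hdisj <| AffineSubspace.inter_nonempty_of_direction_ne_of_finrank_add_one_eq
    (AffineSubspace.nonempty_of_finrank_direction_eq_one hx)
    (AffineSubspace.nonempty_of_finrank_direction_eq_one hy)
    (by rw [hx, finrank_euclideanSpace_fin]) (hy.trans hx.symm) hne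

theorem parallel_trans
    (x y z : AffineSubspace ℝ (EuclideanSpace ℝ (Fin 2)))
    (hx : Module.finrank ℝ x.direction = 1)
    (hy : Module.finrank ℝ y.direction = 1)
    (hz : Module.finrank ℝ z.direction = 1)
    (hxy : ParallelLines x y) (hyz : ParallelLines y z) :
    ParallelLines x z := by
  have hxz : x.direction = z.direction :=
    (hxy.direction_eq hx hy).trans (hyz.direction_eq hy hz)
  exact or_iff_not_imp_right.2 fun hmeet => AffineSubspace.ext_of_direction_eq hxz (not_not.1 hmeet)
end

section
/- (Equilateral triangle on a given base, Euclid I.1) Let A, B, P be points in the Euclidean plane E := EuclideanSpace ℝ (Fin 2) with ¬ Collinear ℝ {A, B, P}. Then there exists a point C such that C and P lie strictly on the same side of the line through A and B (i.e., (affineSpan ℝ {A, B}).SSameSide C P) and dist A B = dist B C and dist B C = dist A C. -/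
/-!
Drop the perpendicular from `P` to the line `AB`; moving from the midpoint `M` of `AB` along
this perpendicular, towards `P`, by `√3/2 · AB` gives a point `C` on the side of `P` whose
foot on the line is `M`. Pythagoras then gives `AC² = BC² = AB²/4 + 3 AB²/4 = AB²`.
-/

open EuclideanGeometry AffineSubspace

variable {V Pt : Type*} [NormedAddCommGroup V] [InnerProductSpace ℝ V] [MetricSpace Pt]
  [NormedAddTorsor V Pt]

theorem exists_sSameSide_orthogonalProjection_eq_dist_eq {s : AffineSubspace ℝ Pt} [Nonempty s]
    [s.direction.HasOrthogonalProjection] {M P : Pt} (hM : M ∈ s) (hP : P ∉ s) {r : ℝ}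
    (hr : 0 < r) : ∃ C, s.SSameSide C P ∧ (orthogonalProjection s C : Pt) = M ∧ dist C M = r := by
  set Q : Pt := (orthogonalProjection s P : Pt)
  have hPQ : 0 < dist P Q := dist_pos.2 fun h => hP (h ▸ orthogonalProjection_mem P)
  refine ⟨(r / dist P Q) • (P -ᵥ Q) +ᵥ M,
    sSameSide_smul_vsub_vadd_left hP (orthogonalProjection_mem P) hM (by positivity), ?_, ?_⟩
  · rw [orthogonalProjection_vadd_smul_vsub_orthogonalProjection _ _ hM]
  · rw [dist_vadd_left, norm_smul, ← dist_eq_norm_vsub, Real.norm_of_nonneg (by positivity),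
      div_mul_cancel₀ _ hPQ.ne']

theorem dist_sq_of_orthogonalProjection_eq_midpoint {A B C : Pt}
    (hC : (orthogonalProjection line[ℝ, A, B] C : Pt) = midpoint ℝ A B) {X : Pt}
    (hX : X = A ∨ X = B) :
    dist X C ^ 2 = (dist A B / 2) ^ 2 + dist C (midpoint ℝ A B) ^ 2 := by
  have hXmem : X ∈ line[ℝ, A, B] := by
    rcases hX with rfl | rfl
    exacts [left_mem_affineSpan_pair ℝ _ _, right_mem_affineSpan_pair ℝ _ _]
  have hXM : dist X (midpoint ℝ A B) = dist A B / 2 := by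
    rcases hX with rfl | rfl
    · rw [dist_left_midpoint]; norm_num; ring
    · rw [dist_right_midpoint]; norm_num; ring
  rw [sq, sq, sq, dist_sq_eq_dist_orthogonalProjection_sq_add_dist_orthogonalProjection_sq C hXmem,
    hC, hXM]

theorem exists_equilateral_sSameSide {A B P : Pt} (hAB : A ≠ B) (hP : P ∉ line[ℝ, A, B]) :
    ∃ C, line[ℝ, A, B].SSameSide C P ∧ dist A B = dist B C ∧ dist B C = dist A C := by
  obtain ⟨C, hCP, hCM, hCdist⟩ := exists_sSameSide_orthogonalProjection_eq_dist_eq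
    (M := midpoint ℝ A B) (AffineMap.lineMap_mem_affineSpan_pair _ A B) hP
    (r := √3 / 2 * dist A B) (by positivity [dist_pos.2 hAB])
  have hside : ∀ X, X = A ∨ X = B → dist X C = dist A B := by
    intro X hX
    have h3 : √3 ^ 2 = 3 := Real.sq_sqrt (by norm_num)
    rw [← sq_eq_sq₀ dist_nonneg dist_nonneg, dist_sq_of_orthogonalProjection_eq_midpoint hCM hX,
      hCdist]
    linear_combination dist A B ^ 2 / 4 * h3
  have hBC := hside B (.inr rfl)
  exact ⟨C, hCP, hBC.symm, hBC.trans (hside A (.inl rfl)).symm⟩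

theorem equilateral_triangle_on_base
    (A B P : EuclideanSpace ℝ (Fin 2))
    (h : ¬ Collinear ℝ ({A, B, P} : Set (EuclideanSpace ℝ (Fin 2)))) :
    ∃ C : EuclideanSpace ℝ (Fin 2),
      (affineSpan ℝ ({A, B} : Set (EuclideanSpace ℝ (Fin 2)))).SSameSide C P ∧
      dist A B = dist B C ∧ dist B C = dist A C := by
  refine exists_equilateral_sSameSide (ne₁₂_of_not_collinear h) fun hP => h ?_
  exact collinear_triple_of_mem_affineSpan_pair (left_mem_affineSpan_pair ℝ A B)
    (right_mem_affineSpan_pair ℝ A B) hP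
end

section
/- (Angle transfer, Euclid I.23) Let A, O, B, A', O', B' be points in the Euclidean plane E := EuclideanSpace ℝ (Fin 2) with ¬ Collinear ℝ {A, O, B} and ¬ Collinear ℝ {A', O', B'}. Then there exists a point P such that P and B lie strictly on the same side of the line through O and A (i.e., (affineSpan ℝ {O, A}).SSameSide B P) and ∠ A O P = ∠ A' O' B'. -/
/-!
Drop the perpendicular from `B` to the line `OA`, with foot `F`, and let `e`, `f` be the unit
vectors along `OA` and `FB`. For `θ = ∠ A' O' B' ∈ (0, π)` the point `O + cos θ • e + sin θ • f`
makes the angle `θ` with `OA`, and it lies on the same side as `B` because its component across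
the line is the positive multiple `sin θ • f` of `FB`.
-/

open EuclideanGeometry Real
open scoped InnerProductSpace

namespace InnerProductGeometry

theorem angle_cos_smul_add_sin_smul {V : Type*} [NormedAddCommGroup V]
    [InnerProductSpace ℝ V] {u n : V} (hu : ‖u‖ = 1) (hn : ‖n‖ = 1) (hun : ⟪u, n⟫_ℝ = 0)
    {θ : ℝ} (h0 : 0 ≤ θ) (hπ : θ ≤ π) : angle u (cos θ • u + sin θ • n) = θ := by
  have hinner : ⟪u, cos θ • u + sin θ • n⟫_ℝ = cos θ := by
    rw [inner_add_right, real_inner_smul_right, real_inner_smul_right,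
      real_inner_self_eq_norm_sq, hu, hun]
    ring
  have hnorm : ‖cos θ • u + sin θ • n‖ = 1 := by
    rw [← pow_eq_one_iff_of_nonneg (norm_nonneg _) two_ne_zero, norm_add_sq_real,
      real_inner_smul_left, real_inner_smul_right, hun, norm_smul, norm_smul, hu, hn,
      Real.norm_eq_abs, Real.norm_eq_abs]
    simp only [mul_one, mul_zero, add_zero, sq_abs, cos_sq_add_sin_sq]
  rw [angle, hinner, hnorm, hu, one_mul, div_one, arccos_cos h0 hπ]

end InnerProductGeometry

theorem AffineSubspace.exists_sSameSide_angle_eq {V P : Type*} [NormedAddCommGroup V]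
    [InnerProductSpace ℝ V] [MetricSpace P] [NormedAddTorsor V P] {s : AffineSubspace ℝ P}
    [s.direction.HasOrthogonalProjection] {O A B : P} (hO : O ∈ s) (hA : A ∈ s) (hAO : A ≠ O)
    (hB : B ∉ s) {θ : ℝ} (h0 : 0 < θ) (hπ : θ < π) :
    ∃ P, s.SSameSide B P ∧ ∠ A O P = θ := by
  have : Nonempty s := ⟨⟨O, hO⟩⟩
  set F : P := (orthogonalProjection s B : P)
  have hF : F ∈ s := orthogonalProjection_mem B
  have hu : A -ᵥ O ≠ 0 := vsub_ne_zero.2 hAO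
  have hn : B -ᵥ F ≠ 0 := vsub_ne_zero.2 fun h ↦ hB (h ▸ hF)
  have hu_dir : A -ᵥ O ∈ s.direction := vsub_mem_direction hA hO
  have hun : ⟪NormedSpace.normalize (A -ᵥ O), NormedSpace.normalize (B -ᵥ F)⟫_ℝ = 0 := by
    rw [NormedSpace.normalize, NormedSpace.normalize, real_inner_smul_left,
      real_inner_smul_right, Submodule.inner_right_of_mem_orthogonal hu_dir
        (vsub_orthogonalProjection_mem_direction_orthogonal s B), mul_zero, mul_zero]
  refine ⟨cos θ • NormedSpace.normalize (A -ᵥ O) +ᵥ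
    (sin θ • NormedSpace.normalize (B -ᵥ F) +ᵥ O), ?_, ?_⟩
  · have he_dir : NormedSpace.normalize (A -ᵥ O) ∈ s.direction := s.direction.smul_mem _ hu_dir
    rw [sSameSide_vadd_right_iff (s.direction.smul_mem _ he_dir), NormedSpace.normalize,
      smul_smul]
    exact sSameSide_smul_vsub_vadd_right hB hF hO
      (mul_pos (sin_pos_of_pos_of_lt_pi h0 hπ) (inv_pos.2 (norm_pos_iff.2 hn)))
  · rw [angle, vadd_vsub_assoc, vadd_vsub,
      ← InnerProductGeometry.angle_smul_left_of_pos _ _ (inv_pos.2 (norm_pos_iff.2 hu))]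
    exact InnerProductGeometry.angle_cos_smul_add_sin_smul (NormedSpace.norm_normalize hu)
      (NormedSpace.norm_normalize hn) hun h0.le hπ.le

theorem angle_transfer
    (A O B A' O' B' : EuclideanSpace ℝ (Fin 2))
    (h₁ : ¬ Collinear ℝ ({A, O, B} : Set (EuclideanSpace ℝ (Fin 2))))
    (h₂ : ¬ Collinear ℝ ({A', O', B'} : Set (EuclideanSpace ℝ (Fin 2)))) :
    ∃ P : EuclideanSpace ℝ (Fin 2),
      (affineSpan ℝ ({O, A} : Set (EuclideanSpace ℝ (Fin 2)))).SSameSide B P ∧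
      ∠ A O P = ∠ A' O' B' := by
  have hB : B ∉ line[ℝ, O, A] := fun hB ↦
    h₁ (collinear_triple_of_mem_affineSpan_pair (right_mem_affineSpan_pair ℝ O A)
      (left_mem_affineSpan_pair ℝ O A) hB)
  exact AffineSubspace.exists_sSameSide_angle_eq (left_mem_affineSpan_pair ℝ O A)
    (right_mem_affineSpan_pair ℝ O A) (ne₁₂_of_not_collinear h₁) hB
    (angle_pos_of_not_collinear h₂) (angle_lt_pi_of_not_collinear h₂)
end
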